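/- Every graph G contains an (ε₁, t)-expander subgraph H with average degree d(H) ≥ d(G)/2 and minimum degree δ(H) ≥ d(H)/2, for some universal constant ε₁ > 0 and every t > 0. -/

import Mathlib

open Set

/-- External neighborhood of a vertex set `U` in `G`. -/
noncomputable def extN {V : Type*} (G : SimpleGraph V) (U : Set V) : Set V :=
  {v | v ∉ U ∧ ∃ u ∈ U, G.Adj u v}

/-- The sublinear expansion rate function of Komlós–Szemerédi /
Haslegrave–Kim–Liu. -/
noncomputable def rho (ε₁ t x : ℝ) : ℝ :=
  if x < t / 5 then 0 else ε₁ / (Real.log (15 * x / t)) ^ 2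

/-- Average degree of the induced subgraph `G[W]`, i.e. `2 e(G[W]) / |W|`
(the numerator counts ordered adjacent pairs inside `W`). -/
noncomputable def avgDeg {V : Type*} (G : SimpleGraph V) (W : Set V) : ℝ :=
  ({p : V × V | p.1 ∈ W ∧ p.2 ∈ W ∧ G.Adj p.1 p.2}.ncard : ℝ) / W.ncard

/-- `H` (a subgraph of the ambient graph, with vertex set `W`) is an
`(ε₁, t)`-expander in the robust sense of Haslegrave, Kim and Liu: for every
`X ⊆ W` with `t/2 ≤ |X| ≤ |W|/2` and every subgraph `F` of `H` with
`e(F) ≤ d(H)·ρ(|X|)·|X|`, we have `|N_{H∖F}(X)| ≥ ρ(|X|)·|X|`. -/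
def RobustExpander {V : Type*} [Fintype V] (H : SimpleGraph V) (W : Set V)
    (ε₁ t : ℝ) : Prop :=
  ∀ X : Set V, X ⊆ W → t / 2 ≤ (X.ncard : ℝ) → (X.ncard : ℝ) ≤ (W.ncard : ℝ) / 2 →
    ∀ F : SimpleGraph V, F ≤ H →
      (F.edgeSet.ncard : ℝ) ≤ avgDeg H W * rho ε₁ t X.ncard * X.ncard →
      rho ε₁ t X.ncard * X.ncard ≤ ((extN (H \ F) X).ncard : ℝ)

/-!
Let `λ(y) = exp (-1 / (2 log (15 y / t)))` (the logarithm clipped below at `1`), an increasing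
function with values in `[1/2, 1]`, let `W` maximize `d(G[W]) / λ(|W|)` and take `H = G[W]`.
As `λ ≥ 1/2`, `d(H) ≥ d(G) / 2`. Maximality gives `2 e(G[W']) ≤ d(H) |W'| λ(|W'|) / λ(|W|)` for
every `W'`, so deleting a vertex of degree `< d(H) / 2` would raise the ratio. If some `X` with
`t/2 ≤ |X| ≤ |W|/2` had `|N_{H∖F}(X)| < ρ |X|`, every edge of `H` would lie in `G[X ∪ N]`, in
`G[W ∖ X]` or in `F`, and counting yields `(1 - 2ρ) λ(|W|) ≤ (1 + ρ) λ((1 + ρ) |X|)`. But from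
`(1 + ρ) |X|` to `2 |X| ≤ |W|` the logarithm of `λ` grows by about `1 / log² (15 |X| / t)`, which
for `ε₁ = 1/100` beats the loss `3ρ`.
-/

open Real

noncomputable def sizeWeight (t y : ℝ) : ℝ :=
  exp (-(1 / 2) / max (log (15 * y / t)) 1)

lemma sizeWeight_pos (t y : ℝ) : 0 < sizeWeight t y := exp_pos _

lemma sizeWeight_le_one (t y : ℝ) : sizeWeight t y ≤ 1 := by
  have hm : 0 < max (log (15 * y / t)) 1 := lt_max_of_lt_right one_pos
  exact exp_le_one_iff.2 (div_nonpos_of_nonpos_of_nonneg (by norm_num) hm.le)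

lemma half_le_sizeWeight (t y : ℝ) : 1 / 2 ≤ sizeWeight t y := by
  have hm : 1 ≤ max (log (15 * y / t)) 1 := le_max_right _ _
  have hexp : -(1 / 2) ≤ -(1 / 2) / max (log (15 * y / t)) 1 := by
    rw [le_div_iff₀ (by linarith)]; nlinarith
  show 1 / 2 ≤ exp _
  linarith [add_one_le_exp (-(1 / 2) / max (log (15 * y / t)) 1)]

lemma sizeWeight_le_sizeWeight {t y z : ℝ} (ht : 0 < t) (hy : 0 ≤ y) (hyz : y ≤ z) :
    sizeWeight t y ≤ sizeWeight t z := by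
  have hlog : log (15 * y / t) ≤ max (log (15 * z / t)) 1 := by
    rcases hy.eq_or_lt with rfl | hy
    · simp
    · exact le_max_of_le_left (log_le_log (by positivity) (by gcongr))
  have hm : 0 < max (log (15 * y / t)) 1 := lt_max_of_lt_right one_pos
  rw [sizeWeight, sizeWeight, exp_le_exp, neg_div, neg_div, neg_le_neg_iff]
  exact div_le_div_of_nonneg_left (by norm_num) hm (max_le hlog (le_max_right _ _))

lemma mul_sizeWeight_le_mul_sizeWeight {t y z : ℝ} (ht : 0 < t) (hy : 0 ≤ y) (hyz : y ≤ z) :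
    y * sizeWeight t y ≤ z * sizeWeight t z :=
  mul_le_mul hyz (sizeWeight_le_sizeWeight ht hy hyz) (sizeWeight_pos t y).le (hy.trans hyz)

lemma sizeWeight_eq_of_one_le_log {t y : ℝ} (h : 1 ≤ log (15 * y / t)) :
    sizeWeight t y = exp (-(1 / 2) / log (15 * y / t)) := by
  rw [sizeWeight, max_eq_left h]

lemma one_add_mul_exp_lt {l p : ℝ} (hl : 2 ≤ l) (hp : 0 ≤ p) (hpl : p * l ^ 2 ≤ 1 / 100) :
    (1 + p) * exp (-(1 / 2) / (l + log (1 + p))) < (1 - 2 * p) * exp (-(1 / 2) / (l + log 2)) := by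
  have hlogp : 0 ≤ log (1 + p) := log_nonneg (by linarith)
  have hlogp' : log (1 + p) ≤ p := by linarith [log_le_sub_one_of_pos (by linarith : 0 < 1 + p)]
  have hlog2 : 0.6931 < log 2 := by linarith [log_two_gt_d9]
  have hlog2' : log 2 < 0.6932 := by linarith [log_two_lt_d9]
  have hl2 : 4 ≤ l ^ 2 := by nlinarith
  have hp400 : p ≤ 1 / 400 := by nlinarith [mul_le_mul_of_nonneg_left hl2 hp]
  set A := l + log (1 + p)
  set B := l + log 2
  have hA : 0 < A := by positivity
  have hB : 0 < B := by positivity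
  -- `exp d` is the ratio of the two exponentials; `d ≳ (log 2) / (2 l²)` outweighs the loss `≈ 3p`.
  set d := 1 / 2 / A - 1 / 2 / B
  have hd_lower : 3 / 20 ≤ d * l ^ 2 := by
    have hd : d * l ^ 2 = (B - A) * l ^ 2 / (2 * A * B) := by simp only [d]; field_simp
    rw [hd, le_div_iff₀ (by positivity)]
    nlinarith
  have hd_upper : d ≤ 1 / 4 := by
    have : 1 / 2 / A ≤ 1 / 4 := by rw [div_le_iff₀ hA]; linarith
    have : 0 ≤ 1 / 2 / B := by positivity
    linarith
  have hpd : 15 * p ≤ d := le_of_mul_le_mul_right (by linarith) (by positivity : 0 < l ^ 2)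
  have hmain : 1 + p < (1 - 2 * p) * (1 + d) := by nlinarith
  calc (1 + p) * exp (-(1 / 2) / A)
      < (1 - 2 * p) * (1 + d) * exp (-(1 / 2) / A) := by gcongr
    _ ≤ (1 - 2 * p) * exp d * exp (-(1 / 2) / A) := by
        gcongr
        · linarith
        · linarith [add_one_le_exp d]
    _ = (1 - 2 * p) * exp (-(1 / 2) / B) := by
        rw [mul_assoc, ← exp_add]; congr 2; simp only [d]; ring

lemma two_le_log_of_half_le {t x : ℝ} (ht : 0 < t) (hx : t / 2 ≤ x) :
    2 ≤ log (15 * x / t) := by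
  have h75 : 7.5 ≤ 15 * x / t := by rw [le_div_iff₀ ht]; linarith
  have he : exp 2 ≤ 7.5 := by
    have h := exp_one_lt_d9
    have : exp 2 = exp 1 * exp 1 := by rw [← exp_add]; norm_num
    nlinarith [exp_pos 1]
  rw [le_log_iff_exp_le (by linarith)]
  linarith

lemma rho_of_half_le {ε t x : ℝ} (ht : 0 < t) (hx : t / 2 ≤ x) :
    rho ε t x = ε / log (15 * x / t) ^ 2 :=
  if_neg (by linarith)

lemma rho_nonneg {ε t x : ℝ} (hε : 0 ≤ ε) (ht : 0 < t) (hx : t / 2 ≤ x) :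
    0 ≤ rho ε t x := by
  rw [rho_of_half_le ht hx]; positivity

lemma rho_le {ε t x : ℝ} (hε : 0 ≤ ε) (ht : 0 < t) (hx : t / 2 ≤ x) :
    rho ε t x ≤ ε / 4 := by
  have hl := two_le_log_of_half_le ht hx
  rw [rho_of_half_le ht hx, div_le_div_iff₀ (by positivity) (by norm_num)]
  have hl2 : 4 ≤ log (15 * x / t) ^ 2 := by nlinarith
  nlinarith [mul_le_mul_of_nonneg_left hl2 hε]

lemma one_add_rho_mul_sizeWeight_lt {t x : ℝ} (ht : 0 < t) (hx : t / 2 ≤ x) :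
    (1 + rho (1 / 100) t x) * sizeWeight t ((1 + rho (1 / 100) t x) * x)
      < (1 - 2 * rho (1 / 100) t x) * sizeWeight t (2 * x) := by
  have hl := two_le_log_of_half_le ht hx
  have hx0 : 0 < 15 * x / t := div_pos (by linarith) ht
  set l := log (15 * x / t)
  set p := rho (1 / 100) t x
  have hp : 0 ≤ p := rho_nonneg (by norm_num) ht hx
  have hpl : p * l ^ 2 ≤ 1 / 100 := by
    rw [show p = 1 / 100 / l ^ 2 from rho_of_half_le ht hx]; field_simp; rfl
  have hlog_mul : ∀ c : ℝ, 1 ≤ c → log (15 * (c * x) / t) = l + log c := fun c hc => by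
    rw [show 15 * (c * x) / t = c * (15 * x / t) by ring, log_mul (by positivity) hx0.ne']
    ring
  have hlogp : 0 ≤ log (1 + p) := log_nonneg (by linarith)
  have hlog2 : 0 ≤ log 2 := log_nonneg (by norm_num)
  rw [sizeWeight_eq_of_one_le_log (by rw [hlog_mul _ (by linarith)]; linarith),
    sizeWeight_eq_of_one_le_log (by rw [hlog_mul _ (by norm_num)]; linarith),
    hlog_mul _ (by linarith), hlog_mul _ (by norm_num)]
  exact one_add_mul_exp_lt hl hp hpl

namespace SimpleGraph

variable {V : Type*}

lemma spanningCoe_induce_adj {G : SimpleGraph V} {s : Set V} {u v : V} :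
    (G.induce s).spanningCoe.Adj u v ↔ G.Adj u v ∧ u ∈ s ∧ v ∈ s := by
  simp only [map_adj, comap_adj, Function.Embedding.subtype_apply]
  constructor
  · rintro ⟨u, v, h, rfl, rfl⟩; exact ⟨h, u.2, v.2⟩
  · rintro ⟨h, hu, hv⟩; exact ⟨⟨u, hu⟩, ⟨v, hv⟩, h, rfl, rfl⟩

end SimpleGraph

open SimpleGraph

section AdjPairs

variable {V : Type*}

def adjPairs (G : SimpleGraph V) (W : Set V) : Set (V × V) :=
  {p | p.1 ∈ W ∧ p.2 ∈ W ∧ G.Adj p.1 p.2}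

lemma avgDeg_nonneg (G : SimpleGraph V) (W : Set V) : 0 ≤ avgDeg G W := by
  unfold avgDeg; positivity

lemma adjPairs_spanningCoe_induce (G : SimpleGraph V) (W : Set V) :
    adjPairs (G.induce W).spanningCoe W = adjPairs G W := by
  ext p
  simp only [adjPairs, spanningCoe_induce_adj, mem_ofPred_eq]
  tauto

lemma avgDeg_spanningCoe_induce (G : SimpleGraph V) (W : Set V) :
    avgDeg (G.induce W).spanningCoe W = avgDeg G W :=
  congrArg (fun P : Set (V × V) => (P.ncard : ℝ) / W.ncard) (adjPairs_spanningCoe_induce G W)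

variable [Finite V]

lemma ncard_adjPairs_le_of_le {H G : SimpleGraph V} (h : H ≤ G) (W : Set V) :
    (adjPairs H W).ncard ≤ (adjPairs G W).ncard :=
  ncard_le_ncard (fun _ ⟨h1, h2, hadj⟩ => ⟨h1, h2, h hadj⟩)

lemma ncard_adjPairs_eq_avgDeg_mul (G : SimpleGraph V) (W : Set V) :
    ((adjPairs G W).ncard : ℝ) = avgDeg G W * W.ncard := by
  rcases W.eq_empty_or_nonempty with rfl | hW
  · simp [adjPairs]
  · have : (W.ncard : ℝ) ≠ 0 := by exact_mod_cast (hW.ncard_pos (toFinite W)).ne'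
    rw [avgDeg, div_mul_cancel₀ _ this]; rfl

lemma ncard_adjPairs_univ (F : SimpleGraph V) : (adjPairs F univ).ncard = 2 * F.edgeSet.ncard := by
  classical
  have : Fintype V := Fintype.ofFinite V
  let e : adjPairs F univ ≃ F.Dart :=
    { toFun := fun p => ⟨p.1, p.2.2.2⟩
      invFun := fun d => ⟨d.toProd, trivial, trivial, d.adj⟩
      left_inv := fun _ => rfl
      right_inv := fun _ => rfl }
  rw [← Nat.card_coe_set_eq, Nat.card_congr e, Nat.card_eq_fintype_card,
    dart_card_eq_twice_card_edges, ← coe_edgeFinset, ncard_coe_finset]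

lemma ncard_adjPairs_le_sdiff_singleton_add (G : SimpleGraph V) (W : Set V) (v : V) :
    (adjPairs G W).ncard ≤ (adjPairs G (W \ {v})).ncard + 2 * (G.neighborSet v).ncard := by
  have hcover : adjPairs G W ⊆ adjPairs G (W \ {v}) ∪
      ((fun u => (v, u)) '' G.neighborSet v ∪ (fun u => (u, v)) '' G.neighborSet v) := by
    rintro ⟨a, b⟩ ⟨ha, hb, hab⟩
    by_cases hav : a = v
    · subst hav; exact Or.inr (Or.inl ⟨b, hab, rfl⟩)
    by_cases hbv : b = v
    · subst hbv; exact Or.inr (Or.inr ⟨a, hab.symm, rfl⟩)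
    exact Or.inl ⟨⟨ha, hav⟩, ⟨hb, hbv⟩, hab⟩
  have h1 : ((fun u => (v, u)) '' G.neighborSet v).ncard = (G.neighborSet v).ncard :=
    ncard_image_of_injective _ fun _ _ h => congrArg Prod.snd h
  have h2 : ((fun u => (u, v)) '' G.neighborSet v).ncard = (G.neighborSet v).ncard :=
    ncard_image_of_injective _ fun _ _ h => congrArg Prod.fst h
  calc (adjPairs G W).ncard
      ≤ (adjPairs G (W \ {v})).ncard + (((fun u => (v, u)) '' G.neighborSet v).ncard
          + ((fun u => (u, v)) '' G.neighborSet v).ncard) :=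
        (ncard_le_ncard hcover).trans <| (ncard_union_le _ _).trans <|
          Nat.add_le_add_left (ncard_union_le _ _) _
    _ = _ := by rw [h1, h2]; ring

lemma ncard_adjPairs_le_extN_add (H F : SimpleGraph V) (W X : Set V) :
    (adjPairs H W).ncard ≤ (adjPairs H (X ∪ extN (H \ F) X)).ncard + (adjPairs H (W \ X)).ncard
      + 2 * F.edgeSet.ncard := by
  have hcover : adjPairs H W ⊆
      adjPairs H (X ∪ extN (H \ F) X) ∪ adjPairs H (W \ X) ∪ adjPairs F univ := by
    rintro ⟨u, v⟩ ⟨hu, hv, huv⟩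
    by_cases hF : F.Adj u v
    · exact Or.inr ⟨trivial, trivial, hF⟩
    have hsd : (H \ F).Adj u v := ⟨huv, hF⟩
    by_cases huX : u ∈ X <;> by_cases hvX : v ∈ X
    · exact Or.inl (Or.inl ⟨Or.inl huX, Or.inl hvX, huv⟩)
    · exact Or.inl (Or.inl ⟨Or.inl huX, Or.inr ⟨hvX, u, huX, hsd⟩, huv⟩)
    · exact Or.inl (Or.inl ⟨Or.inr ⟨huX, v, hvX, hsd.symm⟩, Or.inl hvX, huv⟩)
    · exact Or.inl (Or.inr ⟨⟨hu, huX⟩, ⟨hv, hvX⟩, huv⟩)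
  rw [← ncard_adjPairs_univ]
  exact (ncard_le_ncard hcover).trans <| (ncard_union_le _ _).trans <|
    Nat.add_le_add_right (ncard_union_le _ _) _

end AdjPairs

noncomputable def weightedDensity {V : Type*} (G : SimpleGraph V) (t : ℝ) (W : Set V) : ℝ :=
  avgDeg G W / sizeWeight t W.ncard

def IsWeightedDensityMax {V : Type*} (G : SimpleGraph V) (t : ℝ) (W : Set V) : Prop :=
  ∀ W', weightedDensity G t W' ≤ weightedDensity G t W

lemma exists_isWeightedDensityMax {V : Type*} [Finite V] (G : SimpleGraph V) (t : ℝ) :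
    ∃ W : Set V, IsWeightedDensityMax G t W :=
  Finite.exists_max _

namespace IsWeightedDensityMax

variable {V : Type*} {G : SimpleGraph V} {t : ℝ} {W : Set V}

lemma ncard_adjPairs_le [Finite V] (hW : IsWeightedDensityMax G t W) (W' : Set V) :
    ((adjPairs G W').ncard : ℝ)
      ≤ weightedDensity G t W * (W'.ncard * sizeWeight t W'.ncard) := by
  have hw := sizeWeight_pos t W'.ncard
  calc ((adjPairs G W').ncard : ℝ)
        = weightedDensity G t W' * (W'.ncard * sizeWeight t W'.ncard) := by
        rw [ncard_adjPairs_eq_avgDeg_mul, weightedDensity]; field_simp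
    _ ≤ _ := by gcongr; exact hW W'

lemma ncard_adjPairs_le_avgDeg_mul [Finite V]
    (hW : IsWeightedDensityMax G t W) (ht : 0 < t) {W' : Set V}
    (hcard : W'.ncard ≤ W.ncard) : ((adjPairs G W').ncard : ℝ) ≤ avgDeg G W * W'.ncard := by
  have hw := sizeWeight_pos t W.ncard
  calc ((adjPairs G W').ncard : ℝ)
        ≤ weightedDensity G t W * (W'.ncard * sizeWeight t W'.ncard) := hW.ncard_adjPairs_le W'
    _ ≤ weightedDensity G t W * (W'.ncard * sizeWeight t W.ncard) := by
        have := avgDeg_nonneg G W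
        unfold weightedDensity
        gcongr
        exact sizeWeight_le_sizeWeight ht (by positivity) (by exact_mod_cast hcard)
    _ = avgDeg G W * W'.ncard := by unfold weightedDensity; field_simp

lemma avgDeg_univ_div_two_le (hW : IsWeightedDensityMax G t W) :
    avgDeg G univ / 2 ≤ avgDeg G W := by
  have h := hW univ
  have h0 := avgDeg_nonneg G univ
  have h1 := sizeWeight_le_one t (univ : Set V).ncard
  have h2 := half_le_sizeWeight t W.ncard
  have hpos := sizeWeight_pos t (univ : Set V).ncard
  unfold weightedDensity at h
  rw [div_le_div_iff₀ hpos (by linarith)] at h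
  nlinarith [avgDeg_nonneg G W]

lemma avgDeg_div_two_le_ncard_neighborSet [Finite V]
    (hW : IsWeightedDensityMax G t W) (ht : 0 < t) {v : V} (hv : v ∈ W) :
    avgDeg G W / 2 ≤ ((G.induce W).spanningCoe.neighborSet v).ncard := by
  by_contra! hdeg
  have hsplit := ncard_adjPairs_le_sdiff_singleton_add (G.induce W).spanningCoe W v
  rw [adjPairs_spanningCoe_induce] at hsplit
  have hsub := ncard_adjPairs_le_of_le (spanningCoe_induce_le G W) (W \ {v})
  have hrest := hW.ncard_adjPairs_le_avgDeg_mul ht (ncard_sdiff_singleton_le W v)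
  have hcard : ((W \ {v}).ncard : ℝ) = W.ncard - 1 := by
    rw [ncard_sdiff_singleton_of_mem hv, Nat.cast_pred ((ncard_pos (toFinite W)).2 ⟨v, hv⟩)]
  have hall := ncard_adjPairs_eq_avgDeg_mul G W
  rw [hcard] at hrest
  have : ((adjPairs G W).ncard : ℝ) ≤ (adjPairs G (W \ {v})).ncard
      + 2 * ((G.induce W).spanningCoe.neighborSet v).ncard := by
    exact_mod_cast hsplit.trans (by omega)
  linarith

lemma robustExpander [Fintype V]
    (hW : IsWeightedDensityMax G t W) (ht : 0 < t)
    (hD : 0 < avgDeg G W) : RobustExpander (G.induce W).spanningCoe W (1 / 100) t := by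
  intro X hXW hxt hxw F _ hFe
  set H := (G.induce W).spanningCoe
  set D := avgDeg G W
  set w : ℝ := (W.ncard : ℝ)
  set x : ℝ := (X.ncard : ℝ)
  set p := rho (1 / 100) t x
  set B := X ∪ extN (H \ F) X
  rw [avgDeg_spanningCoe_induce] at hFe
  by_contra! hN
  have hx : 0 < x := by linarith
  have hp : 0 ≤ p := rho_nonneg (by norm_num) ht hxt
  have hp' : p ≤ 1 / 400 := by linarith [rho_le (ε := 1 / 100) (by norm_num) ht hxt]
  have hB : (B.ncard : ℝ) ≤ (1 + p) * x := by
    have : (B.ncard : ℝ) ≤ X.ncard + (extN (H \ F) X).ncard := by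
      exact_mod_cast ncard_union_le _ _
    linarith
  have hsplit : ((adjPairs H W).ncard : ℝ) ≤ (adjPairs H B).ncard + (adjPairs H (W \ X)).ncard
      + 2 * F.edgeSet.ncard := by exact_mod_cast ncard_adjPairs_le_extN_add H F W X
  rw [adjPairs_spanningCoe_induce, ncard_adjPairs_eq_avgDeg_mul] at hsplit
  have hBbound : ((adjPairs H B).ncard : ℝ)
      ≤ weightedDensity G t W * ((1 + p) * x * sizeWeight t ((1 + p) * x)) := by
    calc ((adjPairs H B).ncard : ℝ) ≤ (adjPairs G B).ncard := by
          exact_mod_cast ncard_adjPairs_le_of_le (spanningCoe_induce_le G W) B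
      _ ≤ weightedDensity G t W * (B.ncard * sizeWeight t B.ncard) :=
          hW.ncard_adjPairs_le B
      _ ≤ _ := mul_le_mul_of_nonneg_left (mul_sizeWeight_le_mul_sizeWeight ht (by positivity) hB)
          (div_nonneg (avgDeg_nonneg G W) (sizeWeight_pos _ _).le)
  have hrest : ((adjPairs H (W \ X)).ncard : ℝ) ≤ D * (w - x) := by
    calc ((adjPairs H (W \ X)).ncard : ℝ) ≤ (adjPairs G (W \ X)).ncard := by
          exact_mod_cast ncard_adjPairs_le_of_le (spanningCoe_induce_le G W) _
      _ ≤ D * (W \ X).ncard :=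
          hW.ncard_adjPairs_le_avgDeg_mul ht (ncard_le_ncard sdiff_subset)
      _ = D * (w - x) := by rw [ncard_sdiff hXW, Nat.cast_sub (ncard_le_ncard hXW)]
  have hlam := sizeWeight_pos t w
  have hcompare : (1 - 2 * p) * sizeWeight t w ≤ (1 + p) * sizeWeight t ((1 + p) * x) := by
    have : D * x * (1 - 2 * p)
        ≤ D / sizeWeight t w * ((1 + p) * x * sizeWeight t ((1 + p) * x)) := by
      unfold weightedDensity at hBbound; nlinarith
    rw [div_mul_eq_mul_div, le_div_iff₀ hlam] at this
    nlinarith [mul_pos hD hx]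
  have hmono : sizeWeight t (2 * x) ≤ sizeWeight t w :=
    sizeWeight_le_sizeWeight ht (by positivity) (by linarith)
  have hgrowth := one_add_rho_mul_sizeWeight_lt ht hxt
  nlinarith

end IsWeightedDensityMax

lemma robustExpander_empty {V : Type*} [Fintype V] (H : SimpleGraph V) {ε₁ t : ℝ}
    (ht : 0 < t) : RobustExpander H ∅ ε₁ t := by
  intro X hX hXt
  rw [subset_empty_iff.1 hX, ncard_empty, Nat.cast_zero] at hXt
  linarith

theorem stmt_7 :
    ∃ ε₁ : ℝ, 0 < ε₁ ∧ ∀ t : ℝ, 0 < t →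
      ∀ (V : Type) [Fintype V] (G : SimpleGraph V),
        ∃ (W : Set V) (H : SimpleGraph V), H ≤ G ∧
          (∀ u v : V, H.Adj u v → u ∈ W ∧ v ∈ W) ∧
          avgDeg G Set.univ / 2 ≤ avgDeg H W ∧
          (∀ v ∈ W, avgDeg H W / 2 ≤ ((H.neighborSet v).ncard : ℝ)) ∧
          RobustExpander H W ε₁ t := by
  refine ⟨1 / 100, by norm_num, fun t ht V _ G => ?_⟩
  rcases (avgDeg_nonneg G univ).eq_or_lt with hG | hG
  · refine ⟨∅, ⊥, bot_le, fun _ _ h => h.elim, ?_, fun _ hv => hv.elim,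
      robustExpander_empty ⊥ ht⟩
    rw [← hG, avgDeg, ncard_empty, Nat.cast_zero, div_zero, zero_div]
  obtain ⟨W, hW⟩ := exists_isWeightedDensityMax G t
  have hhalf := hW.avgDeg_univ_div_two_le
  refine ⟨W, (G.induce W).spanningCoe, spanningCoe_induce_le G W,
    fun _ _ h => (spanningCoe_induce_adj.1 h).2, ?_, ?_, hW.robustExpander ht (by linarith)⟩
  · rwa [avgDeg_spanningCoe_induce]
  · rw [avgDeg_spanningCoe_induce]
    exact fun v hv => hW.avgDeg_div_two_le_ncard_neighborSet ht hv
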